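/- arXiv:1706.02470 — 2 statements merged into one kernel-verified Lean document; each statement's English description precedes it below -/
import Mathlib

section
/- Let r : ℕ → ℂ be a linearly recurrent sequence all of whose associated eigenvalues are either zero or have argument a rational multiple of π. Then there exist a positive integer D, a nonnegative integer d, positive real numbers ρ_1 < ρ_2 < ⋯ < ρ_D (the distinct moduli of the nonzero eigenvalues), and a FINITE set A ⊆ ℂ such that for every n ≥ 0 there are coefficients α_{n,m,t} ∈ A (for 1 ≤ m ≤ D and 0 ≤ t ≤ d) with r(n) = Σ_{m=1}^{D} Σ_{t=0}^{d} α_{n,m,t} · n^t · ρ_m^n. (If all eigenvalues are zero, r is eventually zero and the statement holds trivially with D = 1 and any ρ_1 > 0.) -/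
/-- `r` satisfies the linear recurrence of order `k` with coefficients `c`:
`r (n + k) = ∑_{j<k} c j * r (n + j)` for all `n ≥ 0`. -/
def IsLinRecWith (r : ℕ → ℂ) (k : ℕ) (c : Fin k → ℂ) : Prop :=
  ∀ n : ℕ, r (n + k) = ∑ j : Fin k, c j * r (n + (j : ℕ))

/-- The characteristic polynomial `X^k - c_{k-1} X^{k-1} - ⋯ - c_0` of the recurrence. -/
noncomputable def charPoly (k : ℕ) (c : Fin k → ℂ) : Polynomial ℂ :=
  Polynomial.X ^ k - ∑ j : Fin k, Polynomial.C (c j) * Polynomial.X ^ (j : ℕ)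

/-- Every eigenvalue (root of the characteristic polynomial) is zero or has
argument a rational multiple of `π`, i.e. `λ/|λ|` is a root of unity. -/
def EigenvaluesRationalArg (k : ℕ) (c : Fin k → ℂ) : Prop :=
  ∀ lam : ℂ, (charPoly k c).IsRoot lam →
    lam = 0 ∨ ∃ m : ℕ, 0 < m ∧ (lam / (‖lam‖ : ℂ)) ^ m = 1


open Polynomial Finset

lemma sum_deg_lt (k : ℕ) (c : Fin k → ℂ) :
    (∑ j : Fin k, Polynomial.C (c j) * Polynomial.X ^ (j : ℕ)).degree < ((k : ℕ) : WithBot ℕ) := by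
  apply lt_of_le_of_lt (degree_sum_le _ _)
  apply Finset.sup_lt_iff (by exact_mod_cast WithBot.bot_lt_coe k) |>.mpr
  intro j _
  apply lt_of_le_of_lt (degree_C_mul_X_pow_le _ _)
  exact_mod_cast Nat.cast_lt.mpr j.2

lemma cp_monic (k : ℕ) (c : Fin k → ℂ) :
    ((X:ℂ[X]) ^ k - ∑ j : Fin k, Polynomial.C (c j) * Polynomial.X ^ (j : ℕ)).Monic := by
  exact monic_X_pow_sub (sum_deg_lt k c)

lemma cp_natDegree (k : ℕ) (c : Fin k → ℂ) :
    ((X:ℂ[X]) ^ k - ∑ j : Fin k, Polynomial.C (c j) * Polynomial.X ^ (j : ℕ)).natDegree = k := by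
  have h := degree_sub_eq_left_of_degree_lt (p := (X:ℂ[X])^k)
    (q := ∑ j : Fin k, Polynomial.C (c j) * Polynomial.X ^ (j : ℕ))
    (by simpa using sum_deg_lt k c)
  apply natDegree_eq_of_degree_eq_some
  simpa using h

def SatPoly (r : ℕ → ℂ) (P : ℂ[X]) : Prop :=
  ∀ n : ℕ, ∑ j ∈ Finset.range (P.natDegree + 1), P.coeff j * r (n + j) = 0

lemma satPoly_of_rec (r : ℕ → ℂ) (k : ℕ) (hk : 1 ≤ k) (c : Fin k → ℂ)
    (hrec : IsLinRecWith r k c) : SatPoly r (charPoly k c) := by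
  intro n
  have hnd : (charPoly k c).natDegree = k := cp_natDegree k c
  rw [hnd]
  have hco : ∀ j, (charPoly k c).coeff j =
      (if j = k then 1 else 0) - (if h : j < k then c ⟨j, h⟩ else 0) := by
    intro j
    unfold charPoly
    rw [coeff_sub, coeff_X_pow, finset_sum_coeff]
    congr 1
    simp only [coeff_C_mul, coeff_X_pow]
    by_cases h : j < k
    · rw [Finset.sum_eq_single (⟨j, h⟩ : Fin k)]
      · simp [h]
      · intro b _ hb
        simp only [mul_ite, mul_one, mul_zero, ite_eq_right_iff]
        intro hbj
        exact absurd (Fin.ext hbj.symm : b = ⟨j, h⟩) hb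
      · simp
    · rw [dif_neg h, Finset.sum_eq_zero]
      intro b _
      simp only [mul_ite, mul_one, mul_zero, ite_eq_right_iff]
      intro hbj
      exact absurd (hbj ▸ b.2) h
  simp only [hco, sub_mul]
  rw [Finset.sum_sub_distrib]
  have h1 : ∑ j ∈ Finset.range (k+1), (if j = k then (1:ℂ) else 0) * r (n + j) = r (n + k) := by
    rw [Finset.sum_eq_single k]
    · simp
    · intro b _ hb; simp [hb]
    · intro h; exact absurd (Finset.self_mem_range_succ k) h
  have h2 : ∑ j ∈ Finset.range (k+1), (if h : j < k then c ⟨j, h⟩ else 0) * r (n + j)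
      = ∑ j : Fin k, c j * r (n + (j:ℕ)) := by
    rw [Finset.sum_range_succ, dif_neg (lt_irrefl k), zero_mul, add_zero,
      Finset.sum_range fun j => (if h : j < k then c ⟨j, h⟩ else 0) * r (n + j)]
    apply Finset.sum_congr rfl
    intro j _
    rw [dif_pos j.2]
  rw [h1, h2, hrec n, sub_eq_zero]

lemma lead_cancel (μ lam : ℂ) (hμ : μ ≠ 0) (e : ℕ) (a : ℂ) :
    ∃ q0 : ℂ[X], (C μ * q0.comp (X + 1) - C lam * q0).natDegree ≤ e ∧
      (C μ * q0.comp (X + 1) - C lam * q0).coeff e = a := by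
  by_cases hne : μ = lam
  · subst hne
    set b : ℂ := a / (μ * (e + 1)) with hb
    have hcomp : (C b * X ^ (e+1)).comp (X + 1) = C b * (X + 1) ^ (e + 1) := by
      simp [mul_comp, pow_comp]
    have heq : C μ * (C b * (X + 1) ^ (e+1)) - C μ * (C b * X ^ (e+1))
        = C (μ * b) * ((X + 1) ^ (e+1) - X ^ (e+1)) := by
      rw [C_mul]; ring
    refine ⟨C b * X ^ (e + 1), ?_, ?_⟩
    · rw [hcomp, heq]
      apply le_trans (natDegree_mul_le)
      rw [natDegree_C, zero_add]
      rw [natDegree_le_iff_coeff_eq_zero]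
      intro m hm
      rw [coeff_sub, coeff_X_add_one_pow, coeff_X_pow]
      rcases eq_or_lt_of_le (Nat.succ_le_of_lt hm) with h | h
      · simp [← h]
      · rw [Nat.choose_eq_zero_of_lt (by omega), if_neg (by omega)]
        simp
    · rw [hcomp, heq, coeff_C_mul, coeff_sub, coeff_X_add_one_pow, coeff_X_pow,
        if_neg (by omega : ¬ e = e + 1), Nat.choose_succ_self_right]
      have h1 : ((e:ℂ) + 1) ≠ 0 := by
        exact Nat.cast_add_one_ne_zero e
      push_cast
      rw [hb]
      field_simp
      ring
  · set b : ℂ := a / (μ - lam) with hb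
    have hcomp : (C b * X ^ e).comp (X + 1) = C b * (X + 1) ^ e := by
      simp [mul_comp, pow_comp]
    refine ⟨C b * X ^ e, ?_, ?_⟩
    · rw [hcomp]
      apply le_trans (natDegree_sub_le _ _)
      apply max_le
      · apply le_trans natDegree_mul_le
        rw [natDegree_C, zero_add]
        apply le_trans natDegree_mul_le
        rw [natDegree_C, zero_add, natDegree_pow]
        have : (X + 1 : ℂ[X]).natDegree = 1 := by
          simpa using natDegree_X_add_C (1:ℂ)
        rw [this, mul_one]
      · apply le_trans natDegree_mul_le
        rw [natDegree_C, zero_add]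
        apply le_trans natDegree_mul_le
        rw [natDegree_C, zero_add, natDegree_X_pow]
    · rw [hcomp]
      simp only [coeff_sub, coeff_C_mul, coeff_X_add_one_pow, coeff_X_pow, if_pos rfl,
        Nat.choose_self]
      have h2 : μ - lam ≠ 0 := sub_ne_zero.mpr hne
      push_cast
      rw [hb]
      field_simp

lemma solveT (μ lam : ℂ) (hμ : μ ≠ 0) (p : ℂ[X]) :
    ∃ q : ℂ[X], C μ * q.comp (X + 1) - C lam * q = p := by
  suffices H : ∀ d : ℕ, ∀ p : ℂ[X], p.natDegree ≤ d →
      ∃ q : ℂ[X], C μ * q.comp (X + 1) - C lam * q = p by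
    exact H p.natDegree p le_rfl
  intro d
  induction d with
  | zero =>
    intro p hp
    obtain ⟨q0, hd, hc⟩ := lead_cancel μ lam hμ 0 (p.coeff 0)
    refine ⟨q0, ?_⟩
    set f := p - (C μ * q0.comp (X + 1) - C lam * q0) with hf
    have h1 : f.natDegree ≤ 0 := le_trans (natDegree_sub_le _ _) (max_le hp hd)
    have h2 : f.coeff 0 = 0 := by simp [hf, hc]
    have : f = 0 := by
      rw [eq_C_of_natDegree_le_zero h1, h2, map_zero]
    exact (sub_eq_zero.mp this).symm
  | succ d IH =>
    intro p hp
    obtain ⟨q0, hd, hc⟩ := lead_cancel μ lam hμ (d+1) (p.coeff (d+1))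
    set f := p - (C μ * q0.comp (X + 1) - C lam * q0) with hf
    have h1 : f.natDegree ≤ d + 1 := le_trans (natDegree_sub_le _ _) (max_le hp hd)
    have h2 : f.coeff (d+1) = 0 := by simp [hf, hc]
    have h3 : f.natDegree ≤ d := by
      rw [natDegree_le_iff_coeff_eq_zero]
      intro m hm
      rcases eq_or_lt_of_le (Nat.succ_le_of_lt hm) with h | h
      · exact h ▸ h2
      · exact coeff_eq_zero_of_natDegree_lt (lt_of_le_of_lt h1 h)
    obtain ⟨q1, hq1⟩ := IH f h3
    refine ⟨q0 + q1, ?_⟩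
    rw [add_comp]
    have : C μ * (q0.comp (X + 1) + q1.comp (X + 1)) - C lam * (q0 + q1)
        = (C μ * q0.comp (X + 1) - C lam * q0) + (C μ * q1.comp (X + 1) - C lam * q1) := by
      ring
    rw [this, hq1, hf]
    ring

lemma satPoly_factor (r : ℕ → ℂ) (lam : ℂ) (Q : ℂ[X]) (hQ : Q ≠ 0)
    (hP : SatPoly r ((X - C lam) * Q)) :
    SatPoly (fun m => r (m+1) - lam * r m) Q := by
  intro n
  set k := Q.natDegree with hk
  have hnd : ((X - C lam) * Q).natDegree = k + 1 := by
    rw [natDegree_mul (X_sub_C_ne_zero lam) hQ, natDegree_X_sub_C, add_comm]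
  have h0 := hP n
  rw [hnd] at h0
  have hco : ∀ j, ((X - C lam) * Q).coeff j = (X * Q).coeff j - lam * Q.coeff j := by
    intro j
    rw [sub_mul, coeff_sub, coeff_C_mul]
  rw [Finset.sum_congr rfl (fun j _ => by rw [hco j])] at h0
  simp only [sub_mul] at h0
  rw [Finset.sum_sub_distrib] at h0
  have h1 : ∑ j ∈ Finset.range (k+1+1), (X * Q).coeff j * r (n + j)
      = ∑ i ∈ Finset.range (k+1), Q.coeff i * r (n + i + 1) := by
    rw [Finset.sum_range_succ']
    simp only [mul_coeff_zero, coeff_X_zero, zero_mul, add_zero]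
    apply Finset.sum_congr rfl
    intro i _
    rw [coeff_X_mul]
    congr 1
  have h2 : ∑ j ∈ Finset.range (k+1+1), lam * Q.coeff j * r (n + j)
      = lam * ∑ j ∈ Finset.range (k+1), Q.coeff j * r (n + j) := by
    rw [Finset.sum_range_succ, coeff_eq_zero_of_natDegree_lt (by omega), Finset.mul_sum]
    simp only [mul_zero, zero_mul, add_zero]
    apply Finset.sum_congr rfl
    intro i _
    ring
  rw [h1, h2] at h0
  have : ∑ i ∈ Finset.range (k+1), Q.coeff i * (r (n + i + 1) - lam * r (n + i))
      = ∑ i ∈ Finset.range (k+1), Q.coeff i * r (n + i + 1)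
        - lam * ∑ i ∈ Finset.range (k+1), Q.coeff i * r (n + i) := by
    rw [Finset.mul_sum, ← Finset.sum_sub_distrib]
    apply Finset.sum_congr rfl
    intro i _
    ring
  calc ∑ i ∈ Finset.range (k+1), Q.coeff i * (r (n + i + 1) - lam * r (n + i))
      = _ := this
    _ = 0 := h0

lemma structure_thm : ∀ (k : ℕ) (P : ℂ[X]), P.Monic → P.natDegree = k →
    ∀ r : ℕ → ℂ, SatPoly r P →
    ∃ (N : ℕ) (s : Finset ℂ) (p : ℂ → ℂ[X]),
      (∀ μ ∈ s, μ ≠ 0 ∧ P.IsRoot μ) ∧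
      ∀ n, N ≤ n → r n = ∑ μ ∈ s, (p μ).eval (n:ℂ) * μ ^ n := by
  intro k
  induction k with
  | zero =>
    intro P hm hd r hP
    have hP1 : P = 1 := hm.natDegree_eq_zero.mp hd
    refine ⟨0, ∅, 0, by simp, ?_⟩
    intro n _
    have := hP n
    rw [hP1] at this
    simpa using this
  | succ k IH =>
    intro P hm hd r hP
    have hPne : P ≠ 0 := hm.ne_zero
    have hdeg : 0 < P.degree := by
      rw [degree_eq_natDegree hPne, hd]
      exact_mod_cast Nat.succ_pos k
    obtain ⟨lam, hlam⟩ := Complex.exists_root hdeg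
    obtain ⟨Q, hPQ⟩ := dvd_iff_isRoot.mpr hlam
    have hQm : Q.Monic := (monic_X_sub_C lam).of_mul_monic_left (hPQ ▸ hm)
    have hQne : Q ≠ 0 := hQm.ne_zero
    have hQd : Q.natDegree = k := by
      have := hPQ ▸ hd
      rw [natDegree_mul (X_sub_C_ne_zero lam) hQne, natDegree_X_sub_C] at this
      omega
    have hs' : SatPoly (fun m => r (m+1) - lam * r m) Q :=
      satPoly_factor r lam Q hQne (hPQ ▸ hP)
    obtain ⟨N, s, p, hroots, hrep⟩ := IH Q hQm hQd _ hs'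
    have hrootsP : ∀ μ ∈ s, μ ≠ 0 ∧ P.IsRoot μ := by
      intro μ hμ
      refine ⟨(hroots μ hμ).1, ?_⟩
      rw [hPQ, IsRoot, eval_mul, (hroots μ hμ).2, mul_zero]
    by_cases hlam0 : lam = 0
    · -- r (m+1) = s' m
      subst hlam0
      refine ⟨N + 1, s, fun μ => (p μ).comp (X - 1) * C μ⁻¹, hrootsP, ?_⟩
      intro n hn
      obtain ⟨m, rfl⟩ : ∃ m, n = m + 1 := ⟨n - 1, by omega⟩
      have hm' : N ≤ m := by omega
      have h1 : r (m+1) = ∑ μ ∈ s, (p μ).eval (m:ℂ) * μ ^ m := by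
        have := hrep m hm'
        simpa using this
      rw [h1]
      apply Finset.sum_congr rfl
      intro μ hμ
      have hμ0 : μ ≠ 0 := (hroots μ hμ).1
      rw [eval_mul, eval_comp, eval_C]
      have hcast : Polynomial.eval (((m+1 : ℕ) : ℂ)) (X - 1 : ℂ[X]) = (m : ℂ) := by
        push_cast
        simp
      rw [hcast]
      rw [pow_succ]
      field_simp
    · -- particular solution
      set f : ℕ → ℂ := fun n => ∑ μ ∈ s, (p μ).eval (n:ℂ) * μ ^ n with hf
      have hq : ∀ μ ∈ s, ∃ qq : ℂ[X], C μ * qq.comp (X + 1) - C lam * qq = p μ := by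
        intro μ hμ
        exact solveT μ lam (hroots μ hμ).1 (p μ)
      choose! q hqspec using hq
      set g : ℕ → ℂ := fun n => ∑ μ ∈ s, (q μ).eval (n:ℂ) * μ ^ n with hg
      have hgrec : ∀ n : ℕ, g (n+1) = lam * g n + f n := by
        intro n
        rw [hg, hf]
        simp only []
        rw [Finset.mul_sum, ← Finset.sum_add_distrib]
        apply Finset.sum_congr rfl
        intro μ hμ
        have hid := congrArg (Polynomial.eval (n:ℂ)) (hqspec μ hμ)
        rw [eval_sub, eval_mul, eval_mul, eval_C, eval_C, eval_comp, eval_add, eval_X,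
          eval_one] at hid
        have : μ * Polynomial.eval ((n:ℂ)+1) (q μ) - lam * Polynomial.eval (n:ℂ) (q μ)
            = Polynomial.eval (n:ℂ) (p μ) := hid
        have hcast : (((n+1 : ℕ)) : ℂ) = (n:ℂ) + 1 := by push_cast; ring
        rw [hcast, pow_succ]
        linear_combination (μ:ℂ)^n * this
      have hcl : ∀ n, N ≤ n → r n = g n + (r N - g N) * lam ^ (n - N) := by
        intro n hn
        induction n, hn using Nat.le_induction with
        | base => simp
        | succ n hn ih =>
          have h1 : r (n+1) = lam * r n + f n := by
            have := hrep n hn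
            rw [hf]
            simp only []
            linear_combination this
          rw [h1, ih, hgrec n]
          have hpow : lam * lam ^ (n - N) = lam ^ (n + 1 - N) := by
            rw [← pow_succ']
            congr 1
            omega
          linear_combination (r N - g N) * hpow
      set β : ℂ := (r N - g N) * (lam⁻¹) ^ N with hβ
      refine ⟨N, insert lam s,
        fun μ => (if μ ∈ s then q μ else 0) + (if μ = lam then C β else 0), ?_, ?_⟩
      · intro μ hμ
        rcases Finset.mem_insert.mp hμ with h | h
        · exact h ▸ ⟨hlam0, hlam⟩
        · exact hrootsP μ h
      · intro n hn
        have hpow2 : lam ^ (n - N) = lam ^ n * (lam⁻¹) ^ N := by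
          have hmul : lam ^ (n - N) * lam ^ N = lam ^ n := by
            rw [← pow_add]; congr 1; omega
          rw [inv_pow, ← hmul, mul_inv_cancel_right₀ (pow_ne_zero N hlam0)]
        have key : r n = g n + β * lam ^ n := by
          rw [hcl n hn, hβ, hpow2]; ring
        rw [key]
        have hsplit : ∀ μ, Polynomial.eval (n:ℂ)
              ((if μ ∈ s then q μ else 0) + (if μ = lam then C β else 0)) * μ ^ n
            = (Polynomial.eval (n:ℂ) (if μ ∈ s then q μ else 0)) * μ ^ n
              + (Polynomial.eval (n:ℂ) (if μ = lam then C β else 0)) * μ ^ n := by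
          intro μ
          rw [eval_add, add_mul]
        rw [Finset.sum_congr rfl (fun μ _ => hsplit μ), Finset.sum_add_distrib]
        have hA : ∑ μ ∈ insert lam s,
            (Polynomial.eval (n:ℂ) (if μ ∈ s then q μ else 0)) * μ ^ n = g n := by
          rw [hg]
          simp only []
          rw [← Finset.sum_subset (Finset.subset_insert lam s)]
          · apply Finset.sum_congr rfl
            intro μ hμ
            rw [if_pos hμ]
          · intro x _ hx
            rw [if_neg hx, eval_zero, zero_mul]
        have hB : ∑ μ ∈ insert lam s,
            (Polynomial.eval (n:ℂ) (if μ = lam then C β else 0)) * μ ^ n = β * lam ^ n := by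
          rw [Finset.sum_eq_single_of_mem lam (Finset.mem_insert_self lam s)]
          · rw [if_pos rfl, eval_C]
          · intro b _ hb
            rw [if_neg hb, eval_zero, zero_mul]
        rw [hA, hB]

theorem eigenvalue_expansion_finite_coefficients
    (r : ℕ → ℂ) (k : ℕ) (hk : 1 ≤ k) (c : Fin k → ℂ)
    (hrec : IsLinRecWith r k c)
    (heig : EigenvaluesRationalArg k c) :
    ∃ (D : ℕ) (_ : 0 < D) (d : ℕ) (ρ : Fin D → ℝ) (A : Finset ℂ),
      StrictMono ρ ∧ (∀ m : Fin D, 0 < ρ m) ∧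
      ∀ n : ℕ, ∃ α : Fin D → Fin (d + 1) → ℂ,
        (∀ m t, α m t ∈ A) ∧
        r n = ∑ m : Fin D, ∑ t : Fin (d + 1),
          α m t * (n : ℂ) ^ (t : ℕ) * ((ρ m : ℂ)) ^ n := by
  have hmono : (charPoly k c).Monic := cp_monic k c
  have hnd : (charPoly k c).natDegree = k := cp_natDegree k c
  obtain ⟨N, s, p, hroots, hrep⟩ :=
    structure_thm k (charPoly k c) hmono hnd r (satPoly_of_rec r k hk c hrec)
  -- orders of the unit parts
  have hord : ∀ μ ∈ s, ∃ m : ℕ, 0 < m ∧ (μ / (‖μ‖ : ℂ)) ^ m = 1 := by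
    intro μ hμ
    rcases heig μ (hroots μ hμ).2 with h | h
    · exact absurd h (hroots μ hμ).1
    · exact h
  choose! ord hord1 hord2 using hord
  set L : ℕ := ∏ μ ∈ s, ord μ with hL
  have hLpos : 0 < L := Finset.prod_pos (fun μ hμ => hord1 μ hμ)
  have hζL : ∀ μ ∈ s, (μ / (‖μ‖ : ℂ)) ^ L = 1 := by
    intro μ hμ
    obtain ⟨t, ht⟩ := Finset.dvd_prod_of_mem ord hμ
    rw [hL, ht, pow_mul, hord2 μ hμ, one_pow]
  have hζn : ∀ μ ∈ s, ∀ n : ℕ, (μ / (‖μ‖ : ℂ)) ^ n = (μ / (‖μ‖ : ℂ)) ^ (n % L) := by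
    intro μ hμ n
    conv_lhs => rw [← Nat.div_add_mod n L]
    rw [pow_add, pow_mul, hζL μ hμ, one_pow, one_mul]
  -- the moduli
  set M : Finset ℝ := insert 1 (s.image fun μ => ‖μ‖) with hM
  set D : ℕ := M.card with hDdef
  have hD : 0 < D := Finset.card_pos.mpr ⟨1, Finset.mem_insert_self 1 _⟩
  set e := M.orderIsoOfFin (rfl : M.card = D) with he
  set ρ : Fin D → ℝ := fun i => (e i : ℝ) with hρ
  have hρmem : ∀ i, ρ i ∈ M := fun i => (e i).2
  have hMpos : ∀ x ∈ M, (0:ℝ) < x := by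
    intro x hx
    rcases Finset.mem_insert.mp hx with h | h
    · rw [h]; norm_num
    · obtain ⟨μ, hμ, rfl⟩ := Finset.mem_image.mp h
      exact norm_pos_iff.mpr (hroots μ hμ).1
  have hρpos : ∀ i, 0 < ρ i := fun i => hMpos _ (hρmem i)
  have hρmono : StrictMono ρ := by
    intro i j hij
    exact_mod_cast e.strictMono hij
  have hρinj : Function.Injective ρ := hρmono.injective
  set d : ℕ := s.sup fun μ => (p μ).natDegree with hd
  set m0 : Fin D := ⟨0, hD⟩ with hm0
  have hρm0 : (ρ m0 : ℂ) ≠ 0 := by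
    exact_mod_cast ne_of_gt (hρpos m0)
  set g : ℕ → Fin D → ℕ → ℂ := fun j m t =>
    ∑ μ ∈ s.filter (fun μ => ‖μ‖ = ρ m), (p μ).coeff t * (μ / (‖μ‖ : ℂ)) ^ j with hg
  set A : Finset ℂ :=
    ((Finset.range L ×ˢ (Finset.univ : Finset (Fin D × Fin (d+1)))).image
      fun x => g x.1 x.2.1 (x.2.2 : ℕ)) ∪
    ((Finset.range N).image fun n => r n / ((ρ m0 : ℂ)) ^ n) ∪ {0} with hA
  refine ⟨D, hD, d, ρ, A, hρmono, hρpos, ?_⟩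
  intro n
  by_cases hn : n < N
  · refine ⟨fun m t => if m = m0 ∧ t = (0 : Fin (d+1)) then r n / ((ρ m0 : ℂ)) ^ n else 0,
      ?_, ?_⟩
    · intro m t
      beta_reduce
      by_cases h : m = m0 ∧ t = (0 : Fin (d+1))
      · rw [if_pos h, hA]
        apply Finset.mem_union_left
        apply Finset.mem_union_right
        exact Finset.mem_image.mpr ⟨n, Finset.mem_range.mpr hn, rfl⟩
      · rw [if_neg h, hA]
        apply Finset.mem_union_right
        simp
    · beta_reduce
      rw [Finset.sum_eq_single m0]
      · rw [Finset.sum_eq_single (0 : Fin (d+1))]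
        · rw [if_pos ⟨rfl, rfl⟩]
          simp only [Fin.val_zero, pow_zero, mul_one]
          field_simp
        · intro t _ ht
          rw [if_neg (by tauto), zero_mul, zero_mul]
        · intro h; exact absurd (Finset.mem_univ _) h
      · intro m _ hm
        apply Finset.sum_eq_zero
        intro t _
        rw [if_neg (by tauto), zero_mul, zero_mul]
      · intro h; exact absurd (Finset.mem_univ _) h
  · push_neg at hn
    refine ⟨fun m t => g (n % L) m (t : ℕ), ?_, ?_⟩
    · intro m t
      beta_reduce
      rw [hA]
      apply Finset.mem_union_left
      apply Finset.mem_union_left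
      apply Finset.mem_image.mpr
      exact ⟨⟨n % L, m, t⟩, by
        simp [Finset.mem_product, Finset.mem_range.mpr (Nat.mod_lt n hLpos)], rfl⟩
    · beta_reduce
      have hφmem : ∀ μ ∈ s, ‖μ‖ ∈ M := fun μ hμ =>
        Finset.mem_insert_of_mem (Finset.mem_image_of_mem _ hμ)
      set φ : ℂ → Fin D := fun μ => if h : ‖μ‖ ∈ M then e.symm ⟨‖μ‖, h⟩ else m0 with hφ
      have hφeq : ∀ μ ∈ s, ∀ m : Fin D, (φ μ = m ↔ ‖μ‖ = ρ m) := by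
        intro μ hμ m
        have h := hφmem μ hμ
        rw [hφ]
        beta_reduce
        rw [dif_pos h]
        rw [OrderIso.symm_apply_eq]
        constructor
        · intro hh
          rw [hρ]
          exact congrArg Subtype.val hh
        · intro hh
          exact Subtype.ext hh
      have step1 : r n = ∑ m : Fin D,
          ∑ μ ∈ s.filter (fun μ => φ μ = m), Polynomial.eval (n:ℂ) (p μ) * μ ^ n := by
        rw [hrep n hn]
        exact (Finset.sum_fiberwise_of_maps_to (fun x _ => Finset.mem_univ (φ x)) _).symm
      rw [step1]
      apply Finset.sum_congr rfl
      intro m _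
      have hfilter : s.filter (fun μ => φ μ = m) = s.filter (fun μ => ‖μ‖ = ρ m) :=
        Finset.filter_congr (fun μ hμ => by
          simp only [hφeq μ hμ m, decide_eq_true_eq])
      rw [hfilter]
      have perμ : ∀ μ ∈ s.filter (fun μ => ‖μ‖ = ρ m),
          Polynomial.eval (n:ℂ) (p μ) * μ ^ n
          = ∑ t ∈ Finset.range (d+1),
              (p μ).coeff t * (μ / (‖μ‖ : ℂ)) ^ (n % L) * (n:ℂ) ^ t * ((ρ m : ℝ) : ℂ) ^ n := by
        intro μ hμf
        obtain ⟨hμs, hμρ⟩ := Finset.mem_filter.mp hμf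
        have hμ0 : μ ≠ 0 := (hroots μ hμs).1
        have hnorm0 : ((‖μ‖ : ℝ) : ℂ) ≠ 0 := by
          exact_mod_cast norm_ne_zero_iff.mpr hμ0
        have h1 : Polynomial.eval (n:ℂ) (p μ)
            = ∑ t ∈ Finset.range (d+1), (p μ).coeff t * (n:ℂ) ^ t := by
          apply Polynomial.eval_eq_sum_range'
          exact Nat.lt_succ_of_le (hd ▸ Finset.le_sup (f := fun μ => (p μ).natDegree) hμs)
        have h2 : μ ^ n = (μ / (‖μ‖ : ℂ)) ^ (n % L) * ((ρ m : ℝ) : ℂ) ^ n := by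
          rw [← hζn μ hμs n, div_pow, div_mul_eq_mul_div, ← hμρ,
            mul_div_assoc, div_self (pow_ne_zero n hnorm0), mul_one]
        rw [h1, h2, Finset.sum_mul]
        apply Finset.sum_congr rfl
        intro t _
        ring
      rw [Finset.sum_congr rfl perμ, Finset.sum_comm]
      rw [← Fin.sum_univ_eq_sum_range (fun t => ∑ μ ∈ s.filter (fun μ => ‖μ‖ = ρ m),
        (p μ).coeff t * (μ / (‖μ‖ : ℂ)) ^ (n % L) * (n:ℂ) ^ t * ((ρ m : ℝ) : ℂ) ^ n)]
      apply Finset.sum_congr rfl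
      intro t _
      rw [hg]
      beta_reduce
      rw [Finset.sum_mul, Finset.sum_mul]
end

section
/- Let s be a positive integer and for each i = 1,...,s let r_i : ℕ → ℂ be a linearly recurrent sequence all of whose associated eigenvalues are either zero or have argument a rational multiple of π, and assume not every r_i has all eigenvalues zero. Let ρ > 0 be the maximum of the moduli of all nonzero eigenvalues of r_1, ..., r_s, and let f : ℕ → ℂ satisfy f(n) ∈ {r_1(n), ..., r_s(n)} for all n ≥ 0. Then there exist a finite set P of polynomials in ℂ[X], a constant C > 0, and a real number σ with 0 ≤ σ < 1, such that for every n ≥ 0 there is a polynomial p ∈ P with | f(n)·ρ^{−n} − p(n) | ≤ C·σ^n. -/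
/-!
Over `ℂ` the characteristic polynomial splits into factors `X - λ`. Peeling them off one at a time
shows that each `rᵢ` eventually equals `∑ μ, p_μ(n) μⁿ` over its nonzero eigenvalues `μ`, with
polynomials `p_μ`: the step from `v(n+1) - λ v(n) = p(n) μⁿ` back to `v` works because, for
`μ ≠ 0`, the equation `μ q(X+1) - λ q = p` has a polynomial solution `q`. After dividing by `ρⁿ`,
the eigenvalues of modulus `ρ` contribute `(μ/ρ)ⁿ`, roots of unity with a common period `M`, so
their part is one of finitely many polynomials indexed by `n mod M`; every other eigenvalue
contributes `O(σⁿ)` for any `σ < 1` above all the ratios `|μ|/ρ`.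
-/

open Polynomial Filter Finset Asymptotics

noncomputable def seqShift : Module.End ℂ (ℕ → ℂ) := LinearMap.funLeft ℂ ℂ Nat.succ

lemma seqShift_pow_apply (j : ℕ) (r : ℕ → ℂ) (n : ℕ) : (seqShift ^ j) r n = r (n + j) := by
  induction j generalizing r with
  | zero => rfl
  | succ j ih => rw [pow_succ, Module.End.mul_apply, ih]; rfl

lemma aeval_seqShift_X_sub_C (a : ℂ) (r : ℕ → ℂ) (n : ℕ) :
    aeval seqShift (X - C a) r n = r (n + 1) - a * r n := by
  simp [seqShift, LinearMap.funLeft_apply]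

lemma IsLinRecWith.aeval_seqShift_charPoly {r : ℕ → ℂ} {k : ℕ} {c : Fin k → ℂ}
    (h : IsLinRecWith r k c) : aeval seqShift (charPoly k c) r = 0 := by
  ext n
  simp [charPoly, seqShift_pow_apply, h n]

lemma charPoly_monic (k : ℕ) (c : Fin k → ℂ) : (charPoly k c).Monic := by
  refine monic_X_pow_sub ((degree_sum_le _ _).trans_lt ?_)
  rw [Finset.sup_lt_iff (by exact_mod_cast WithBot.bot_lt_coe k)]
  exact fun j _ => (degree_C_mul_X_pow_le _ _).trans_lt (WithBot.coe_lt_coe.2 j.isLt)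

noncomputable def twistedDiff (a b : ℂ) (q : ℂ[X]) : ℂ[X] :=
  C a * q.comp (X + 1) - C b * q

lemma eval_twistedDiff (a b : ℂ) (q : ℂ[X]) (x : ℂ) :
    (twistedDiff a b q).eval x = a * q.eval (x + 1) - b * q.eval x := by
  simp [twistedDiff, eval_comp]

lemma coeff_twistedDiff_C_mul_X_pow (a b c : ℂ) (m j : ℕ) :
    (twistedDiff a b (C c * X ^ m)).coeff j = c * (a * m.choose j - if j = m then b else 0) := by
  simp only [twistedDiff, mul_comp, C_comp, X_pow_comp, coeff_sub, coeff_C_mul,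
    coeff_X_add_one_pow, coeff_X_pow]
  split_ifs <;> ring

lemma exists_twistedDiff_coeff_eq_of_natDegree_le {a : ℂ} (ha : a ≠ 0) (b : ℂ) (p : ℂ[X]) :
    ∃ q : ℂ[X], ∀ j, p.natDegree ≤ j → (twistedDiff a b q).coeff j = p.coeff j := by
  set e := p.natDegree
  have hlead : p.leadingCoeff = p.coeff e := rfl
  by_cases hab : a = b
  · -- `q ↦ a (q(X+1) - q)` lowers degrees by one, so the leading term needs `X ^ (e + 1)`
    subst hab
    refine ⟨C (p.leadingCoeff / (a * (e + 1))) * X ^ (e + 1), fun j hj => ?_⟩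
    have he : (e + 1 : ℂ) ≠ 0 := Nat.cast_add_one_ne_zero e
    rw [coeff_twistedDiff_C_mul_X_pow]
    rcases hj.eq_or_lt with rfl | hj
    · rw [Nat.choose_succ_self_right, if_neg (Nat.succ_ne_self _).symm, hlead]
      push_cast
      field_simp
      ring
    · rw [coeff_eq_zero_of_natDegree_lt hj]
      rcases (Nat.succ_le_of_lt hj).eq_or_lt with rfl | hj'
      · simp
      · simp [Nat.choose_eq_zero_of_lt hj', hj'.ne']
  · refine ⟨C (p.leadingCoeff / (a - b)) * X ^ e, fun j hj => ?_⟩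
    have hab' : a - b ≠ 0 := sub_ne_zero.2 hab
    rw [coeff_twistedDiff_C_mul_X_pow]
    rcases hj.eq_or_lt with rfl | hj
    · simp only [Nat.choose_self, Nat.cast_one, mul_one, if_true, hlead]
      field_simp
    · simp [coeff_eq_zero_of_natDegree_lt hj, Nat.choose_eq_zero_of_lt hj, hj.ne']

lemma exists_twistedDiff_eq {a : ℂ} (ha : a ≠ 0) (b : ℂ) (p : ℂ[X]) :
    ∃ q : ℂ[X], twistedDiff a b q = p := by
  induction p using degree_lt_wf.induction with
  | _ p ih =>
  by_cases hp : p = 0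
  · exact ⟨0, by simp [twistedDiff, hp]⟩
  obtain ⟨q₀, hq₀⟩ := exists_twistedDiff_coeff_eq_of_natDegree_le ha b p
  have hlt : degree (p - twistedDiff a b q₀) < degree p := by
    rw [degree_eq_natDegree hp, degree_lt_iff_coeff_zero]
    intro j hj
    rw [coeff_sub, hq₀ j (by exact_mod_cast hj), sub_self]
  obtain ⟨q₁, hq₁⟩ := ih _ hlt
  refine ⟨q₀ + q₁, ?_⟩
  rw [← sub_add_cancel p (twistedDiff a b q₀), ← hq₁]
  simp only [twistedDiff, add_comp]
  ring

def EventuallyExpPoly (S : Finset ℂ) (r : ℕ → ℂ) : Prop :=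
  ∃ p : ℂ → ℂ[X], ∀ᶠ n in atTop, r n = ∑ μ ∈ S, (p μ).eval (n : ℂ) * μ ^ n

namespace EventuallyExpPoly

variable {S : Finset ℂ} {r u : ℕ → ℂ}

lemma zero : EventuallyExpPoly S 0 :=
  ⟨0, .of_forall fun n => by simp⟩

lemma congr (hr : EventuallyExpPoly S r) (h : r =ᶠ[atTop] u) : EventuallyExpPoly S u :=
  let ⟨p, hp⟩ := hr
  ⟨p, (h.symm.and hp).mono fun _ hn => hn.1.trans hn.2⟩

lemma add (hr : EventuallyExpPoly S r) (hu : EventuallyExpPoly S u) :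
    EventuallyExpPoly S (r + u) :=
  let ⟨p, hp⟩ := hr
  let ⟨q, hq⟩ := hu
  ⟨p + q, (hp.and hq).mono fun n hn => by
    simp only [Pi.add_apply, eval_add, add_mul, sum_add_distrib, hn.1, hn.2]⟩

lemma const_mul_pow {a : ℂ} (ha : a ∈ S) (B : ℂ) :
    EventuallyExpPoly S fun n => B * a ^ n := by
  classical
  exact ⟨fun μ => if μ = a then C B else 0, .of_forall fun n => by
    simp only [apply_ite, eval_C, eval_zero, ite_mul, zero_mul, sum_ite_eq', if_pos ha]⟩

lemma of_eventually_succ_eq_mul {a : ℂ} (ha : a ≠ 0 → a ∈ S)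
    (h : ∀ᶠ n in atTop, r (n + 1) = a * r n) : EventuallyExpPoly S r := by
  obtain ⟨N, hN⟩ := eventually_atTop.1 h
  have hgeom : ∀ n ≥ N, r n = r N * a ^ (n - N) := by
    intro n hn
    induction n, hn using Nat.le_induction with
    | base => simp
    | succ n hn ih => rw [hN n hn, ih, Nat.sub_add_comm hn, pow_succ]; ring
  by_cases ha0 : a = 0
  · refine zero.congr (eventually_atTop.2 ⟨N + 1, fun n hn => ?_⟩)
    rw [hgeom n (by omega), ha0, zero_pow (by omega), mul_zero, Pi.zero_apply]
  · refine (const_mul_pow (ha ha0) (r N / a ^ N)).congr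
      (eventually_atTop.2 ⟨N, fun n hn => ?_⟩)
    show _ * a ^ n = _
    rw [hgeom n hn, ← pow_sub_mul_pow a hn]
    field_simp

lemma of_sub_mul (hS : (0 : ℂ) ∉ S) {a : ℂ} (ha : a ≠ 0 → a ∈ S)
    (h : EventuallyExpPoly S fun n => r (n + 1) - a * r n) : EventuallyExpPoly S r := by
  obtain ⟨p, hp⟩ := h
  have hsol : ∀ μ, ∃ q : ℂ[X], μ ∈ S → twistedDiff μ a q = p μ := fun μ => by
    by_cases hμ : μ ∈ S
    · exact (exists_twistedDiff_eq (ne_of_mem_of_not_mem hμ hS) a (p μ)).imp fun _ h _ => h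
    · exact ⟨0, fun h => absurd h hμ⟩
  choose q hq using hsol
  set v : ℕ → ℂ := fun n => r n - ∑ μ ∈ S, (q μ).eval (n : ℂ) * μ ^ n
  have hv : ∀ᶠ n in atTop, v (n + 1) = a * v n := hp.mono fun n hn => by
    have hsum : ∑ μ ∈ S, (p μ).eval (n : ℂ) * μ ^ n =
        ∑ μ ∈ S, (q μ).eval ((n + 1 : ℕ) : ℂ) * μ ^ (n + 1) -
          a * ∑ μ ∈ S, (q μ).eval (n : ℂ) * μ ^ n := by
      rw [mul_sum, ← sum_sub_distrib]
      refine sum_congr rfl fun μ hμ => ?_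
      rw [← hq μ hμ, eval_twistedDiff]
      push_cast
      ring
    simp only [v]
    linear_combination hn + hsum
  have hr : r = v + fun n : ℕ => ∑ μ ∈ S, (q μ).eval (n : ℂ) * μ ^ n := by
    ext n
    simp [v]
  rw [hr]
  exact (of_eventually_succ_eq_mul ha hv).add ⟨q, .of_forall fun _ => rfl⟩

end EventuallyExpPoly

lemma eventuallyExpPoly_of_aeval_prod_eq_zero {S : Finset ℂ} (hS : (0 : ℂ) ∉ S)
    (m : Multiset ℂ) (hm : ∀ μ ∈ m, μ ≠ 0 → μ ∈ S) {r : ℕ → ℂ}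
    (hr : aeval seqShift (m.map fun μ => X - C μ).prod r = 0) : EventuallyExpPoly S r := by
  induction m using Multiset.induction_on generalizing r with
  | empty =>
    simp only [Multiset.map_zero, Multiset.prod_zero, map_one, Module.End.one_apply] at hr
    exact hr ▸ .zero
  | cons a m ih =>
    rw [Multiset.map_cons, Multiset.prod_cons, mul_comm, map_mul, Module.End.mul_apply] at hr
    refine .of_sub_mul hS (hm a (Multiset.mem_cons_self a m)) ?_
    convert ih (fun μ hμ => hm μ (Multiset.mem_cons_of_mem hμ)) hr using 1
    ext n
    rw [aeval_seqShift_X_sub_C]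

lemma IsLinRecWith.eventuallyExpPoly {r : ℕ → ℂ} {k : ℕ} {c : Fin k → ℂ}
    (h : IsLinRecWith r k c) : EventuallyExpPoly ((charPoly k c).roots.toFinset.erase 0) r := by
  refine eventuallyExpPoly_of_aeval_prod_eq_zero (notMem_erase 0 _) (charPoly k c).roots
    (fun μ hμ hμ0 => mem_erase.2 ⟨hμ0, Multiset.mem_toFinset.2 hμ⟩) ?_
  rw [prod_multiset_X_sub_C_of_monic_of_roots_card_eq (charPoly_monic k c)
    IsAlgClosed.card_roots_eq_natDegree]
  exact h.aeval_seqShift_charPoly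

lemma isBigO_eval_mul_pow (p : ℂ[X]) {x : ℂ} {σ : ℝ} (h : ‖x‖ < σ) :
    (fun n : ℕ => p.eval (n : ℂ) * x ^ n) =O[atTop] (σ ^ ·) := by
  simp_rw [eval_eq_sum_range, sum_mul, mul_assoc]
  exact IsBigO.fun_sum fun j _ =>
    (isLittleO_pow_const_mul_const_pow_const_pow_of_norm_lt j h).isBigO.const_mul_left _

def HasFinitePolyApprox (σ : ℝ) (u : ℕ → ℂ) : Prop :=
  ∃ g : ℕ → ℂ[X], (Set.range g).Finite ∧ (fun n => u n - (g n).eval (n : ℂ)) =O[atTop] (σ ^ ·)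

lemma EventuallyExpPoly.hasFinitePolyApprox {S : Finset ℂ} {r : ℕ → ℂ}
    (hr : EventuallyExpPoly S r) {ρ σ : ℝ} (hρ : 0 < ρ) (hle : ∀ μ ∈ S, ‖μ‖ ≤ ρ)
    (hunit : ∀ μ ∈ S, ‖μ‖ = ρ → IsOfFinOrder (μ / ρ))
    (hσ : ∀ μ ∈ S, ‖μ‖ < ρ → ‖μ‖ / ρ < σ) :
    HasFinitePolyApprox σ fun n => r n / (ρ : ℂ) ^ n := by
  classical
  obtain ⟨p, hp⟩ := hr
  set T := S.filter fun μ => ‖μ‖ = ρ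
  set M := ∏ μ ∈ T, orderOf (μ / ρ)
  have hM : ∀ μ ∈ T, (μ / ρ) ^ M = 1 := fun μ hμ =>
    orderOf_dvd_iff_pow_eq_one.1 (dvd_prod_of_mem _ hμ)
  have hM0 : 0 < M := prod_pos fun μ hμ =>
    (hunit μ (mem_filter.1 hμ).1 (mem_filter.1 hμ).2).orderOf_pos
  set g : ℕ → ℂ[X] := fun j => ∑ μ ∈ T, C ((μ / ρ) ^ j) * p μ
  have hg : ∀ n, (g (n % M)).eval (n : ℂ) = ∑ μ ∈ T, (p μ).eval (n : ℂ) * (μ / ρ) ^ n := by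
    intro n
    simp only [g, eval_finsetSum, eval_mul, eval_C]
    exact sum_congr rfl fun μ hμ => by rw [← pow_eq_pow_mod n (hM μ hμ), mul_comm]
  refine ⟨fun n => g (n % M), ((Set.finite_Iio M).image g).subset
    (Set.range_subset_iff.2 fun n => ⟨n % M, Nat.mod_lt n hM0, rfl⟩), ?_⟩
  have hsmall : (fun n : ℕ => ∑ μ ∈ S.filter (fun μ => ¬‖μ‖ = ρ),
      (p μ).eval (n : ℂ) * (μ / ρ) ^ n) =O[atTop] (σ ^ ·) := by
    refine IsBigO.fun_sum fun μ hμ => isBigO_eval_mul_pow _ ?_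
    obtain ⟨hμS, hμρ⟩ := mem_filter.1 hμ
    rw [norm_div, Complex.norm_of_nonneg hρ.le]
    exact hσ μ hμS ((hle μ hμS).lt_of_ne hμρ)
  refine hsmall.congr' (hp.mono fun n hn => ?_) EventuallyEq.rfl
  dsimp only
  rw [hn, hg, sum_div, ← sum_filter_add_sum_filter_not S fun μ => ‖μ‖ = ρ]
  simp only [div_pow, mul_div_assoc]
  ring

namespace HasFinitePolyApprox

variable {σ : ℝ}

lemma of_forall_exists_eq {ι : Type*} [Fintype ι] {u : ι → ℕ → ℂ}
    (hu : ∀ i, HasFinitePolyApprox σ (u i)) {f : ℕ → ℂ} (hf : ∀ n, ∃ i, f n = u i n) :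
    HasFinitePolyApprox σ f := by
  choose g hg hgO using hu
  choose ι hι using hf
  refine ⟨fun n => g (ι n) n, (Set.finite_iUnion hg).subset
    (Set.range_subset_iff.2 fun n => Set.mem_iUnion.2 ⟨ι n, n, rfl⟩), ?_⟩
  refine IsBigO.trans (isBigO_of_le (g := fun n => ∑ i, ‖u i n - (g i n).eval (n : ℂ)‖) _
    fun n => ?_) (IsBigO.fun_sum fun i _ => (hgO i).norm_left)
  rw [Real.norm_of_nonneg (sum_nonneg fun i _ => norm_nonneg _), hι n]
  exact single_le_sum (f := fun i => ‖u i n - (g i n).eval (n : ℂ)‖)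
    (fun i _ => norm_nonneg _) (mem_univ (ι n))

lemma exists_forall_bound {u : ℕ → ℂ} (hu : HasFinitePolyApprox σ u) (hσ : 0 ≤ σ) :
    ∃ (P : Finset ℂ[X]) (K : ℝ), 0 < K ∧ ∀ n, ∃ p ∈ P, ‖u n - p.eval (n : ℂ)‖ ≤ K * σ ^ n := by
  obtain ⟨g, hg, hgO⟩ := hu
  obtain ⟨K, hK⟩ := hgO.bound
  obtain ⟨N, hN⟩ := eventually_atTop.1 hK
  refine ⟨hg.toFinset ∪ (range N).image fun n => C (u n), max K 0 + 1, by positivity,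
    fun n => ?_⟩
  rcases lt_or_ge n N with hn | hn
  · refine ⟨C (u n), mem_union_right _ (mem_image_of_mem _ (mem_range.2 hn)), ?_⟩
    rw [eval_C, sub_self, norm_zero]
    positivity
  · refine ⟨g n, mem_union_left _ (hg.mem_toFinset.2 ⟨n, rfl⟩), ?_⟩
    calc ‖u n - (g n).eval (n : ℂ)‖ ≤ K * ‖σ ^ n‖ := hN n hn
      _ ≤ (max K 0 + 1) * σ ^ n := by
        rw [norm_pow, Real.norm_of_nonneg hσ]
        gcongr
        linarith [le_max_left K 0]

end HasFinitePolyApprox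

theorem scaled_coefficients_close_to_polynomial_values_general
    (s : ℕ)
    (r : Fin s → ℕ → ℂ) (k : Fin s → ℕ)
    (c : (i : Fin s) → Fin (k i) → ℂ)
    (hrec : ∀ i, IsLinRecWith (r i) (k i) (c i))
    (heig : ∀ i, EigenvaluesRationalArg (k i) (c i))
    (ρ : ℝ) (hρ : 0 < ρ)
    (hρub : ∀ i : Fin s, ∀ lam : ℂ, (charPoly (k i) (c i)).IsRoot lam →
      lam ≠ 0 → ‖lam‖ ≤ ρ)
    (f : ℕ → ℂ) (hf : ∀ n : ℕ, ∃ i : Fin s, f n = r i n) :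
    ∃ (P : Finset (Polynomial ℂ)) (C : ℝ) (σ : ℝ),
      0 < C ∧ 0 ≤ σ ∧ σ < 1 ∧
      ∀ n : ℕ, ∃ p ∈ P,
        ‖f n / (ρ : ℂ) ^ n - p.eval (n : ℂ)‖ ≤ C * σ ^ n := by
  set S := fun i => (charPoly (k i) (c i)).roots.toFinset.erase 0
  have hS : ∀ i, ∀ μ ∈ S i, (charPoly (k i) (c i)).IsRoot μ ∧ μ ≠ 0 := fun i μ hμ =>
    ⟨(mem_roots (charPoly_monic _ _).ne_zero).1 (Multiset.mem_toFinset.1 (mem_erase.1 hμ).2),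
      (mem_erase.1 hμ).1⟩
  obtain ⟨σ, hσ, hσ0, hσ1⟩ :
      ∃ σ : ℝ, (∀ i, ∀ μ ∈ S i, ‖μ‖ < ρ → ‖μ‖ / ρ < σ) ∧ σ ∈ Set.Ioo 0 1 := by
    refine ((eventually_all.2 fun i => (eventually_all_finset _).2 fun μ _ => ?_).and
      (Ioo_mem_nhdsLT one_pos)).exists
    by_cases h : ‖μ‖ < ρ
    · exact Filter.mem_of_superset (Ioo_mem_nhdsLT ((div_lt_one hρ).2 h)) fun σ hσ _ => hσ.1
    · exact .of_forall fun _ h' => absurd h' h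
  have hunit : ∀ i, ∀ μ ∈ S i, ‖μ‖ = ρ → IsOfFinOrder (μ / ρ) := fun i μ hμ hμρ => by
    obtain ⟨hroot, hμ0⟩ := hS i μ hμ
    rw [← hμρ, isOfFinOrder_iff_pow_eq_one]
    exact (heig i μ hroot).resolve_left hμ0
  have happrox : HasFinitePolyApprox σ fun n => f n / (ρ : ℂ) ^ n :=
    .of_forall_exists_eq (fun i => (hrec i).eventuallyExpPoly.hasFinitePolyApprox hρ
      (fun μ hμ => hρub i μ (hS i μ hμ).1 (hS i μ hμ).2) (hunit i) (hσ i))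
      fun n => (hf n).imp fun i h => by rw [h]
  obtain ⟨P, K, hK, hP⟩ := happrox.exists_forall_bound hσ0.le
  exact ⟨P, K, σ, hK, hσ0.le, hσ1, hP⟩

theorem scaled_coefficients_close_to_polynomial_values
    (s : ℕ) (hs : 0 < s)
    (r : Fin s → ℕ → ℂ) (k : Fin s → ℕ) (hk : ∀ i, 1 ≤ k i)
    (c : (i : Fin s) → Fin (k i) → ℂ)
    (hrec : ∀ i, IsLinRecWith (r i) (k i) (c i))
    (heig : ∀ i, EigenvaluesRationalArg (k i) (c i))
    (ρ : ℝ) (hρ : 0 < ρ)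
    (hρub : ∀ i : Fin s, ∀ lam : ℂ, (charPoly (k i) (c i)).IsRoot lam →
      lam ≠ 0 → ‖lam‖ ≤ ρ)
    (hρmax : ∃ i : Fin s, ∃ lam : ℂ, (charPoly (k i) (c i)).IsRoot lam ∧
      lam ≠ 0 ∧ ‖lam‖ = ρ)
    (f : ℕ → ℂ) (hf : ∀ n : ℕ, ∃ i : Fin s, f n = r i n) :
    ∃ (P : Finset (Polynomial ℂ)) (C : ℝ) (σ : ℝ),
      0 < C ∧ 0 ≤ σ ∧ σ < 1 ∧
      ∀ n : ℕ, ∃ p ∈ P,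
        ‖f n / (ρ : ℂ) ^ n - p.eval (n : ℂ)‖ ≤ C * σ ^ n :=
  scaled_coefficients_close_to_polynomial_values_general s r k c hrec heig ρ hρ hρub f hf
end
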